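/- arXiv:2107.09235 — 3 statements merged into one kernel-verified Lean document; each statement's English description precedes it below -/
import Mathlib

section
/- In the life-cycle measurement error model Y_{a} = λ^Y_a Y* + U^Y_a (for each age a in a finite set 𝒜), with A_Y the (random) age at which income is observed and Y = Y_{A_Y}: if (Y*, U^Y_{vec a}) ⫫ A_Y, E[U^Y_a] = 0 for all a, there exists a known age a* with λ^Y_{a*} = 1, and E[Y*] ≠ 0, then for every a ∈ 𝒜, λ^Y_a = E[Y | A_Y = a] / E[Y | A_Y = a*]. -/
/-!
On the event `{A_Y = a}` the observed income is `λ_a Y* + U_a`. Since `A_Y` is independent of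
`Y*` and of `U_a`, integrating each of them over that event just multiplies its mean by
`P(A_Y = a)`; the errors have mean zero, so `E[Y; A_Y = a] = P(A_Y = a) λ_a E[Y*]`. Dividing by
`P(A_Y = a)` and normalising by the reference age, where `λ_{a*} = 1`, cancels `E[Y*] ≠ 0`.
-/

open MeasureTheory ProbabilityTheory

lemma ProbabilityTheory.IndepFun.setIntegral_preimage_eq_mul {Ω β : Type*}
    {mΩ : MeasurableSpace Ω} {mβ : MeasurableSpace β} {μ : Measure Ω} {f : Ω → ℝ} {X : Ω → β}
    (hfX : IndepFun f X μ) (hf : AEMeasurable f μ) (hX : Measurable X)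
    {s : Set β} (hs : MeasurableSet s) :
    ∫ ω in X ⁻¹' s, f ω ∂μ = μ.real (X ⁻¹' s) * ∫ ω, f ω ∂μ :=
  Indep.setIntegral_eq_mul (f := id) hX.comap_le hfX.symm hf ⟨s, hs, rfl⟩
    aestronglyMeasurable_id

theorem setIntegral_observed_of_age_eq {Ω A : Type*} [MeasurableSpace Ω] {μ : Measure Ω}
    [MeasurableSpace A] [MeasurableSingletonClass A]
    {Ys : Ω → ℝ} {U : A → Ω → ℝ} {AY : Ω → A} {lam : A → ℝ} {Yobs : Ω → ℝ}
    (hAY : Measurable AY) (hobs : ∀ ω, Yobs ω = lam (AY ω) * Ys ω + U (AY ω) ω)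
    (hindep : IndepFun (fun ω => (Ys ω, fun a => U a ω)) AY μ)
    (hint : Integrable Ys μ) (hUint : ∀ a, Integrable (U a) μ)
    (hmean0 : ∀ a, ∫ ω, U a ω ∂μ = 0) (a : A) :
    ∫ ω in {ω | AY ω = a}, Yobs ω ∂μ = μ.real {ω | AY ω = a} * (lam a * ∫ ω, Ys ω ∂μ) := by
  have hYs : IndepFun Ys AY μ := hindep.comp measurable_fst measurable_id
  have hUa : IndepFun (U a) AY μ :=
    hindep.comp ((measurable_pi_apply a).comp measurable_snd) measurable_id
  have hobs_a : ∫ ω in {ω | AY ω = a}, Yobs ω ∂μ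
      = ∫ ω in AY ⁻¹' {a}, (lam a * Ys ω + U a ω) ∂μ :=
    setIntegral_congr_fun (hAY (measurableSet_singleton a)) fun ω (hω : AY ω = a) => by
      rw [hobs ω, hω]
  rw [hobs_a, integral_add (hint.const_mul _).restrict (hUint a).restrict, integral_const_mul,
    hYs.setIntegral_preimage_eq_mul hint.aemeasurable hAY (measurableSet_singleton a),
    hUa.setIntegral_preimage_eq_mul (hUint a).aemeasurable hAY (measurableSet_singleton a),
    hmean0 a]
  simp only [Set.preimage, Set.mem_singleton_iff]
  ring

theorem stmt_17_general {Ω : Type*} [m0 : MeasurableSpace Ω] (μ : Measure Ω) [IsProbabilityMeasure μ]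
    {A : Type*} [MeasurableSpace A] [MeasurableSingletonClass A]
    (Ys : Ω → ℝ) (U : A → Ω → ℝ) (AY : Ω → A) (lam : A → ℝ) (Yobs : Ω → ℝ)
    (hAY : Measurable AY)
    (hobs : ∀ ω, Yobs ω = lam (AY ω) * Ys ω + U (AY ω) ω)
    (hindep : IndepFun (fun ω => (Ys ω, fun a => U a ω)) AY μ)
    (hint : Integrable Ys μ) (hUint : ∀ a, Integrable (U a) μ)
    (hmean0 : ∀ a, ∫ ω, U a ω ∂μ = 0)
    (astar : A) (hstar : lam astar = 1)
    (hEYs : ∫ ω, Ys ω ∂μ ≠ 0)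
    (hpos : ∀ a, 0 < μ {ω | AY ω = a}) :
    ∀ a : A, lam a
      = ((∫ ω in {ω | AY ω = a}, Yobs ω ∂μ) / (μ {ω | AY ω = a}).toReal)
        / ((∫ ω in {ω | AY ω = astar}, Yobs ω ∂μ) / (μ {ω | AY ω = astar}).toReal) := by
  have hcondMean : ∀ a, (∫ ω in {ω | AY ω = a}, Yobs ω ∂μ) / (μ {ω | AY ω = a}).toReal
      = lam a * ∫ ω, Ys ω ∂μ := fun a => by
    rw [setIntegral_observed_of_age_eq hAY hobs hindep hint hUint hmean0 a, measureReal_def,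
      mul_div_cancel_left₀ _ (ENNReal.toReal_ne_zero.mpr ⟨(hpos a).ne', measure_ne_top μ _⟩)]
  intro a
  rw [hcondMean a, hcondMean astar, hstar, one_mul, mul_div_cancel_right₀ _ hEYs]

/-- Identification of life-cycle scaling factors (Proposition A.1): in the model
`Y_a = λ_a Y* + U_a` observed at a random age `A_Y` independent of `(Y*, U)`, with
mean-zero errors, a reference age `a*` with `λ_{a*} = 1` and `E[Y*] ≠ 0`,
`λ_a = E[Y | A_Y = a] / E[Y | A_Y = a*]`. -/
theorem stmt_17 {Ω : Type*} [m0 : MeasurableSpace Ω] (μ : Measure Ω) [IsProbabilityMeasure μ]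
    {A : Type*} [Fintype A] [MeasurableSpace A] [MeasurableSingletonClass A]
    (Ys : Ω → ℝ) (U : A → Ω → ℝ) (AY : Ω → A) (lam : A → ℝ) (Yobs : Ω → ℝ)
    (hYs : Measurable Ys) (hU : ∀ a, Measurable (U a)) (hAY : Measurable AY)
    (hobs : ∀ ω, Yobs ω = lam (AY ω) * Ys ω + U (AY ω) ω)
    (hindep : IndepFun (fun ω => (Ys ω, fun a => U a ω)) AY μ)
    (hint : Integrable Ys μ) (hUint : ∀ a, Integrable (U a) μ)
    (hmean0 : ∀ a, ∫ ω, U a ω ∂μ = 0)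
    (astar : A) (hstar : lam astar = 1)
    (hEYs : ∫ ω, Ys ω ∂μ ≠ 0)
    (hpos : ∀ a, 0 < μ {ω | AY ω = a}) :
    ∀ a : A, lam a
      = ((∫ ω in {ω | AY ω = a}, Yobs ω ∂μ) / (μ {ω | AY ω = a}).toReal)
        / ((∫ ω in {ω | AY ω = astar}, Yobs ω ∂μ) / (μ {ω | AY ω = astar}).toReal) :=
  stmt_17_general (m0 := m0) μ Ys U AY lam Yobs hAY hobs hindep hint hUint hmean0 astar hstar hEYs
    hpos
end

section
/- In the life-cycle measurement error model, suppose: (i) (Y*, T*, U^Y_{vec a_Y}, U^T_{vec a_T}, X) ⫫ (A_Y, A_T); (ii) for all ages (a_Y, a_T), (U^Y_{a_Y}, U^T_{a_T}) ⫫ (Y*, T*, X); (iii) for all ages, U^Y_{a_Y} ⫫ U^T_{a_T}. Define Ũ^Y = U^Y_{A_Y} / λ^Y_{A_Y} and Ũ^T = U^T_{A_T} / λ^T_{A_T} (with λ's nonzero constants per age). Then (Ũ^Y, Ũ^T) ⫫ (Y*, T*, X). -/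
/-!
On the event `{(A_Y, A_T) = (a_Y, a_T)}` the rescaled errors coincide with the errors at the
frozen ages, `(U^Y_{a_Y} / λ^Y_{a_Y}, U^T_{a_T} / λ^T_{a_T})`. Because the ages are independent of
the errors and `(Y*, T*, X)` jointly, the probability of a rectangle event on that fibre is the
probability for the frozen ages times `P((A_Y, A_T) = (a_Y, a_T))`; for frozen ages it factorizes
by assumption, and summing over the fibres gives the factorization for `(Ũ^Y, Ũ^T)`.
-/

open MeasureTheory ProbabilityTheory

theorem measure_eq_tsum_inter_preimage_singleton {Ω ι : Type*} [MeasurableSpace Ω]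
    [MeasurableSpace ι] [Countable ι] [MeasurableSingletonClass ι] (μ : Measure Ω)
    {P : Ω → ι} (hP : Measurable P) {W : Set Ω} (hW : MeasurableSet W) :
    μ W = ∑' i, μ (W ∩ P ⁻¹' {i}) := by
  rw [← measure_iUnion
      (fun i j hij => ((pairwise_disjoint_fiber P hij).inter_left' W).inter_right' W)
      (fun i => hW.inter (hP (measurableSet_singleton i))),
    ← Set.inter_iUnion, ← Set.preimage_iUnion, Set.iUnion_of_singleton, Set.preimage_univ,
    Set.inter_univ]

section RandomIndex

variable {Ω ι β γ : Type*} [MeasurableSpace Ω] [MeasurableSpace ι] [MeasurableSingletonClass ι]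
  [MeasurableSpace β] [MeasurableSpace γ] {μ : Measure Ω} {P : Ω → ι} {F : ι → Ω → β}
  {g : Ω → γ}

theorem measure_eval_random_index_inter_preimage_singleton {i : ι}
    (h : IndepFun (fun ω => (F i ω, g ω)) P μ) {s : Set β} {t : Set γ}
    (hs : MeasurableSet s) (ht : MeasurableSet t) :
    μ ((fun ω => F (P ω) ω) ⁻¹' s ∩ g ⁻¹' t ∩ P ⁻¹' {i}) =
      μ (F i ⁻¹' s ∩ g ⁻¹' t) * μ (P ⁻¹' {i}) := by
  have hfiber : (fun ω => F (P ω) ω) ⁻¹' s ∩ g ⁻¹' t ∩ P ⁻¹' {i} =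
      (fun ω => (F i ω, g ω)) ⁻¹' s ×ˢ t ∩ P ⁻¹' {i} := by
    ext ω
    by_cases hi : P ω = i <;> simp [hi]
  rw [hfiber, indepFun_iff_measure_inter_preimage_eq_mul.mp h _ _ (hs.prod ht)
    (measurableSet_singleton i), Set.mk_preimage_prod]

theorem indepFun_eval_random_index [Countable ι]
    (hP : Measurable P) (hF : ∀ i, Measurable (F i)) (hg : Measurable g)
    (hFgP : ∀ i, IndepFun (fun ω => (F i ω, g ω)) P μ) (hFg : ∀ i, IndepFun (F i) g μ) :
    IndepFun (fun ω => F (P ω) ω) g μ := by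
  set f := fun ω => F (P ω) ω
  have hf : Measurable f :=
    (measurable_from_prod_countable_left (f := fun q : Ω × ι => F q.2 q.1) hF).comp
      (measurable_id.prodMk hP)
  rw [indepFun_iff_measure_inter_preimage_eq_mul]
  intro s t hs ht
  have hfs : μ (f ⁻¹' s) = ∑' i, μ (F i ⁻¹' s) * μ (P ⁻¹' {i}) := by
    rw [measure_eq_tsum_inter_preimage_singleton μ hP (hf hs)]
    congr with i
    simpa using
      measure_eval_random_index_inter_preimage_singleton (hFgP i) hs MeasurableSet.univ
  calc μ (f ⁻¹' s ∩ g ⁻¹' t)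
      = ∑' i, μ (f ⁻¹' s ∩ g ⁻¹' t ∩ P ⁻¹' {i}) :=
        measure_eq_tsum_inter_preimage_singleton μ hP ((hf hs).inter (hg ht))
    _ = ∑' i, μ (F i ⁻¹' s) * μ (P ⁻¹' {i}) * μ (g ⁻¹' t) := by
        congr with i
        rw [measure_eval_random_index_inter_preimage_singleton (hFgP i) hs ht,
          indepFun_iff_measure_inter_preimage_eq_mul.mp (hFg i) s t hs ht, mul_right_comm]
    _ = μ (f ⁻¹' s) * μ (g ⁻¹' t) := by rw [ENNReal.tsum_mul_right, hfs]

end RandomIndex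

theorem stmt_18_general {Ω : Type*} [m0 : MeasurableSpace Ω] (μ : Measure Ω)
    {A : Type*} [Fintype A] [MeasurableSpace A] [MeasurableSingletonClass A]
    {γ : Type*} [MeasurableSpace γ]
    (Ys Ts : Ω → ℝ) (X : Ω → γ)
    (UY UT : A → Ω → ℝ) (AY AT : Ω → A) (lamY lamT : A → ℝ)
    (hYs : Measurable Ys) (hTs : Measurable Ts) (hX : Measurable X)
    (hUY : ∀ a, Measurable (UY a)) (hUT : ∀ a, Measurable (UT a))
    (hAY : Measurable AY) (hAT : Measurable AT)
    (hindepA : IndepFun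
      (fun ω => (Ys ω, Ts ω, (fun a => UY a ω), (fun a => UT a ω), X ω))
      (fun ω => (AY ω, AT ω)) μ)
    (hindepU : ∀ aY aT : A,
      IndepFun (fun ω => (UY aY ω, UT aT ω)) (fun ω => (Ys ω, Ts ω, X ω)) μ) :
    IndepFun
      (fun ω => (UY (AY ω) ω / lamY (AY ω), UT (AT ω) ω / lamT (AT ω)))
      (fun ω => (Ys ω, Ts ω, X ω)) μ := by
  let F : A × A → Ω → ℝ × ℝ := fun a ω => (UY a.1 ω / lamY a.1, UT a.2 ω / lamT a.2)
  have hF : ∀ a, Measurable (F a) := fun a =>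
    ((hUY a.1).div_const _).prodMk ((hUT a.2).div_const _)
  have hFgA : ∀ a, IndepFun (fun ω => (F a ω, Ys ω, Ts ω, X ω)) (fun ω => (AY ω, AT ω)) μ :=
    fun a => hindepA.comp (φ := fun q => ((q.2.2.1 a.1 / lamY a.1, q.2.2.2.1 a.2 / lamT a.2),
      q.1, q.2.1, q.2.2.2.2)) (by fun_prop) measurable_id
  have hFg : ∀ a, IndepFun (F a) (fun ω => (Ys ω, Ts ω, X ω)) μ :=
    fun a => (hindepU a.1 a.2).comp (φ := fun q : ℝ × ℝ => (q.1 / lamY a.1, q.2 / lamT a.2))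
      (by fun_prop) measurable_id
  exact indepFun_eval_random_index (F := F) (hAY.prodMk hAT) hF
    (hYs.prodMk (hTs.prodMk hX)) hFgA hFg

/-- Proposition A.2, first claim: in the life-cycle measurement error model, the rescaled
measurement errors `Ũ^Y = U^Y_{A_Y}/λ^Y_{A_Y}` and `Ũ^T = U^T_{A_T}/λ^T_{A_T}` are jointly
independent of `(Y*, T*, X)`. -/
theorem stmt_18 {Ω : Type*} [m0 : MeasurableSpace Ω] (μ : Measure Ω) [IsProbabilityMeasure μ]
    {A : Type*} [Fintype A] [MeasurableSpace A] [MeasurableSingletonClass A]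
    {γ : Type*} [MeasurableSpace γ]
    (Ys Ts : Ω → ℝ) (X : Ω → γ)
    (UY UT : A → Ω → ℝ) (AY AT : Ω → A) (lamY lamT : A → ℝ)
    (hYs : Measurable Ys) (hTs : Measurable Ts) (hX : Measurable X)
    (hUY : ∀ a, Measurable (UY a)) (hUT : ∀ a, Measurable (UT a))
    (hAY : Measurable AY) (hAT : Measurable AT)
    (hlamY : ∀ a, lamY a ≠ 0) (hlamT : ∀ a, lamT a ≠ 0)
    (hindepA : IndepFun
      (fun ω => (Ys ω, Ts ω, (fun a => UY a ω), (fun a => UT a ω), X ω))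
      (fun ω => (AY ω, AT ω)) μ)
    (hindepU : ∀ aY aT : A,
      IndepFun (fun ω => (UY aY ω, UT aT ω)) (fun ω => (Ys ω, Ts ω, X ω)) μ)
    (hUUindep : ∀ aY aT : A, IndepFun (UY aY) (UT aT) μ) :
    IndepFun
      (fun ω => (UY (AY ω) ω / lamY (AY ω), UT (AT ω) ω / lamT (AT ω)))
      (fun ω => (Ys ω, Ts ω, X ω)) μ :=
  stmt_18_general (m0 := m0) μ Ys Ts X UY UT AY AT lamY lamT hYs hTs hX hUY hUT hAY hAT hindepA
    hindepU
end

section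
/- In the life-cycle measurement error model, suppose: (i) (Y*, T*, U^Y_{vec a_Y}, U^T_{vec a_T}, X) ⫫ (A_Y, A_T); (ii) for all ages (a_Y, a_T), U^Y_{a_Y} ⫫ U^T_{a_T}; and (iii) the distribution of U^Y_{a_Y}/λ^Y_{a_Y} is the same for every age a_Y. Then the rescaled measurement errors Ũ^Y = U^Y_{A_Y}/λ^Y_{A_Y} and Ũ^T = U^T_{A_T}/λ^T_{A_T} are independent of each other. -/
open MeasureTheory ProbabilityTheory

/-! Given the ages `(A_Y, A_T) = (a, b)`, the pair `(Ũ^Y, Ũ^T)` is distributed as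
`(U^Y_a / λ^Y_a, U^T_b / λ^T_b)`, because the errors are independent of the ages; this is a
product law by (ii). By (iii) its first factor does not depend on `a`, so it factors out of the
average over the ages, and what remains is the law of `Ũ^T`. -/

theorem ProbabilityTheory.IndepFun.measure_preimage_apply_index {Ω ι β γ : Type*}
    [MeasurableSpace Ω] [MeasurableSpace ι] [MeasurableSingletonClass ι] [Countable ι]
    [MeasurableSpace β] [MeasurableSpace γ] {μ : Measure Ω} {V : Ω → β} {K : Ω → ι}
    (hVK : IndepFun V K μ) (hV : Measurable V) (hK : Measurable K)
    {φ : ι → β → γ} (hφ : ∀ i, Measurable (φ i)) {S : Set γ} (hS : MeasurableSet S) :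
    μ ((fun ω => φ (K ω) (V ω)) ⁻¹' S)
      = ∑' i, μ ((fun ω => φ i (V ω)) ⁻¹' S) * μ (K ⁻¹' {i}) := by
  have hfiber : (fun ω => φ (K ω) (V ω)) ⁻¹' S
      = ⋃ i, (fun ω => φ i (V ω)) ⁻¹' S ∩ K ⁻¹' {i} := by
    ext ω
    simp
  rw [hfiber, measure_iUnion]
  · exact tsum_congr fun i => (hVK.comp (hφ i) measurable_id).measure_inter_preimage_eq_mul
      _ _ hS (measurableSet_singleton i)
  · exact fun i j hij => ((Set.pairwiseDisjoint_fiber K Set.univ) trivial trivial hij).mono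
      Set.inter_subset_right Set.inter_subset_right
  · exact fun i => ((hφ i).comp hV hS).inter (hK (measurableSet_singleton i))

theorem tsum_measure_preimage_singleton_univ {Ω ι : Type*} [MeasurableSpace Ω]
    [MeasurableSpace ι] [MeasurableSingletonClass ι] [Countable ι] (μ : Measure Ω)
    {K : Ω → ι} (hK : Measurable K) :
    ∑' i, μ (K ⁻¹' {i}) = μ Set.univ := by
  rw [← tsum_univ]
  exact tsum_measure_preimage_singleton Set.countable_univ
    fun i _ => hK (measurableSet_singleton i)

theorem ProbabilityTheory.IndepFun.indepFun_apply_index {Ω ι β γ δ : Type*}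
    [MeasurableSpace Ω] [MeasurableSpace ι] [MeasurableSingletonClass ι] [Countable ι]
    [MeasurableSpace β] [MeasurableSpace γ] [MeasurableSpace δ]
    {μ : Measure Ω} [IsProbabilityMeasure μ] {V : Ω → β} {K : Ω → ι}
    (hVK : IndepFun V K μ) (hV : Measurable V) (hK : Measurable K)
    {φ : ι → β → γ} {ψ : ι → β → δ}
    (hφ : ∀ i, Measurable (φ i)) (hψ : ∀ i, Measurable (ψ i))
    (hφψ : ∀ i, IndepFun (fun ω => φ i (V ω)) (fun ω => ψ i (V ω)) μ)
    (hφ_law : ∀ i j, μ.map (fun ω => φ i (V ω)) = μ.map (fun ω => φ j (V ω))) :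
    IndepFun (fun ω => φ (K ω) (V ω)) (fun ω => ψ (K ω) (V ω)) μ := by
  obtain ⟨ω₀⟩ := nonempty_of_isProbabilityMeasure μ
  rw [indepFun_iff_measure_inter_preimage_eq_mul]
  intro s t hs ht
  set p : ι → ENNReal := fun i => μ ((fun ω => φ i (V ω)) ⁻¹' s)
  set q : ι → ENNReal := fun i => μ ((fun ω => ψ i (V ω)) ⁻¹' t)
  have hp : ∀ i, p i = p (K ω₀) := fun i => by
    have h_law : ∀ j, p j = μ.map (fun ω => φ j (V ω)) s := fun j =>
      (Measure.map_apply ((hφ j).comp hV) hs).symm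
    rw [h_law, h_law, hφ_law i (K ω₀)]
  have hK_total : ∑' i, μ (K ⁻¹' {i}) = 1 := by
    rw [tsum_measure_preimage_singleton_univ μ hK, measure_univ]
  calc μ ((fun ω => φ (K ω) (V ω)) ⁻¹' s ∩ (fun ω => ψ (K ω) (V ω)) ⁻¹' t)
      = ∑' i, p i * q i * μ (K ⁻¹' {i}) := by
        rw [← Set.mk_preimage_prod, hVK.measure_preimage_apply_index hV hK
          (fun i => (hφ i).prodMk (hψ i)) (hs.prod ht)]
        exact tsum_congr fun i => by
          rw [Set.mk_preimage_prod, (hφψ i).measure_inter_preimage_eq_mul s t hs ht]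
    _ = p (K ω₀) * ∑' i, q i * μ (K ⁻¹' {i}) := by
        simp only [hp, mul_assoc, ENNReal.tsum_mul_left]
    _ = (∑' i, p i * μ (K ⁻¹' {i})) * ∑' i, q i * μ (K ⁻¹' {i}) := by
        simp only [hp, ENNReal.tsum_mul_left, hK_total, mul_one]
    _ = μ ((fun ω => φ (K ω) (V ω)) ⁻¹' s)
          * μ ((fun ω => ψ (K ω) (V ω)) ⁻¹' t) := by
        rw [hVK.measure_preimage_apply_index hV hK hφ hs,
          hVK.measure_preimage_apply_index hV hK hψ ht]

theorem stmt_19_general {Ω : Type*} [m0 : MeasurableSpace Ω] (μ : Measure Ω) [IsProbabilityMeasure μ]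
    {A : Type*} [Fintype A] [MeasurableSpace A] [MeasurableSingletonClass A]
    {γ : Type*} [MeasurableSpace γ]
    (Ys Ts : Ω → ℝ) (X : Ω → γ)
    (UY UT : A → Ω → ℝ) (AY AT : Ω → A) (lamY lamT : A → ℝ)
    (hUY : ∀ a, Measurable (UY a)) (hUT : ∀ a, Measurable (UT a))
    (hAY : Measurable AY) (hAT : Measurable AT)
    (hindepA : IndepFun
      (fun ω => (Ys ω, Ts ω, (fun a => UY a ω), (fun a => UT a ω), X ω))
      (fun ω => (AY ω, AT ω)) μ)
    (hUUindep : ∀ aY aT : A, IndepFun (UY aY) (UT aT) μ)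
    (hsame : ∀ a a' : A,
      Measure.map (fun ω => UY a ω / lamY a) μ
        = Measure.map (fun ω => UY a' ω / lamY a') μ) :
    IndepFun (fun ω => UY (AY ω) ω / lamY (AY ω))
      (fun ω => UT (AT ω) ω / lamT (AT ω)) μ := by
  have hV : Measurable fun ω => ((fun a => UY a ω), (fun a => UT a ω)) :=
    (measurable_pi_lambda _ hUY).prodMk (measurable_pi_lambda _ hUT)
  have hVK := hindepA.comp (measurable_snd.snd.fst.prodMk measurable_snd.snd.snd.fst)
    measurable_id
  refine hVK.indepFun_apply_index (φ := fun p v => v.1 p.1 / lamY p.1)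
    (ψ := fun p v => v.2 p.2 / lamT p.2) hV (hAY.prodMk hAT)
    (fun p => ((measurable_pi_apply p.1).comp measurable_fst).div_const _)
    (fun p => ((measurable_pi_apply p.2).comp measurable_snd).div_const _)
    (fun p => ?_) (fun p p' => hsame p.1 p'.1)
  exact (hUUindep p.1 p.2).comp (measurable_id.div_const _) (measurable_id.div_const _)

/-- Proposition A.2, second claim: in the life-cycle measurement error model, if the
rescaled child measurement error has an age-invariant distribution, then the rescaled
errors `Ũ^Y = U^Y_{A_Y}/λ^Y_{A_Y}` and `Ũ^T = U^T_{A_T}/λ^T_{A_T}` are independent. -/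
theorem stmt_19 {Ω : Type*} [m0 : MeasurableSpace Ω] (μ : Measure Ω) [IsProbabilityMeasure μ]
    {A : Type*} [Fintype A] [MeasurableSpace A] [MeasurableSingletonClass A]
    {γ : Type*} [MeasurableSpace γ]
    (Ys Ts : Ω → ℝ) (X : Ω → γ)
    (UY UT : A → Ω → ℝ) (AY AT : Ω → A) (lamY lamT : A → ℝ)
    (hYs : Measurable Ys) (hTs : Measurable Ts) (hX : Measurable X)
    (hUY : ∀ a, Measurable (UY a)) (hUT : ∀ a, Measurable (UT a))
    (hAY : Measurable AY) (hAT : Measurable AT)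
    (hlamY : ∀ a, lamY a ≠ 0) (hlamT : ∀ a, lamT a ≠ 0)
    (hindepA : IndepFun
      (fun ω => (Ys ω, Ts ω, (fun a => UY a ω), (fun a => UT a ω), X ω))
      (fun ω => (AY ω, AT ω)) μ)
    (hUUindep : ∀ aY aT : A, IndepFun (UY aY) (UT aT) μ)
    (hsame : ∀ a a' : A,
      Measure.map (fun ω => UY a ω / lamY a) μ
        = Measure.map (fun ω => UY a' ω / lamY a') μ) :
    IndepFun (fun ω => UY (AY ω) ω / lamY (AY ω))
      (fun ω => UT (AT ω) ω / lamT (AT ω)) μ :=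
  stmt_19_general (m0 := m0) μ Ys Ts X UY UT AY AT lamY lamT hUY hUT hAY hAT hindepA hUUindep hsame
end
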